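/- For every integer n ≥ 2: 4·tot_n(212) = (n−2)(3^(n−3) − 1) and 4·tot_n(312) = (n−5)·3^(n−3) + n − 1 (both products interpreted as real equalities; for n = 2 both totals are 0). -/

import Mathlib

/-!
A flattened Catalan word `w` with last letter `ℓ`, whose last increasing run starts with `h`,
extends to the right exactly by the letters `h, …, ℓ + 1`: a new run must not start below the
previous run heads, and `h` is the largest of them. So the words are generated by the state
`(ℓ, h)`, and a word of slack `s = ℓ - h` has `s + 2` children. A new occurrence of a pattern
`τ₁τ₂τ₃` with `τ₂ < τ₁, τ₃` can only end at an appended `ℓ + 1` after a descent, where the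
slack of the child is `1`. Summing over children gives linear recursions for the number of
words, the total slack, the total number of occurrences `O` and the slack-weighted number of
occurrences `P`. These two recursions are symmetric and both vanish at length `2`, so `O = P`
and `O(n + 1) = 3 O(n) + E(n)`, where `E(n)` counts the words ending in `(ℓ + 1) ℓ` (for `212`)
or `(≥ ℓ + 2) ℓ` (for `312`), and these are again read off the slack statistics. Solving the
recursions gives the closed forms.
-/

open scoped BigOperators

/-- `w` is a Catalan word: it is nonempty, starts with `1`, and each subsequent
letter lies between `1` and the previous letter plus one. -/
def IsCatalan (w : List ℕ) : Prop :=
  w ≠ [] ∧ w.getD 0 0 = 1 ∧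
    ∀ i, i + 1 < w.length →
      1 ≤ w.getD (i + 1) 0 ∧ w.getD (i + 1) 0 ≤ w.getD i 0 + 1

/-- `i` is the starting index of a maximal weakly increasing run of `w`. -/
def RunStart (w : List ℕ) (i : ℕ) : Prop :=
  i < w.length ∧ (i = 0 ∨ w.getD i 0 < w.getD (i - 1) 0)

/-- `w` is flattened: the first letters of its increasing runs, read left to
right, form a weakly nondecreasing sequence. -/
def IsFlattened (w : List ℕ) : Prop :=
  ∀ i j, RunStart w i → RunStart w j → i ≤ j → w.getD i 0 ≤ w.getD j 0

/-- The set of flattened Catalan words of length `n`. -/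
def FlatCat (n : ℕ) : Set (List ℕ) :=
  {w | w.length = n ∧ IsCatalan w ∧ IsFlattened w}

/-- `i` is the starting index of an occurrence of the consecutive pattern `τ`
in the word `w`, i.e. the factor of `w` of length `|τ|` starting at `i` is
order-isomorphic to `τ`. -/
def OccAt (τ w : List ℕ) (i : ℕ) : Prop :=
  i + τ.length ≤ w.length ∧
    ∀ s < τ.length, ∀ t < τ.length,
      (w.getD (i + s) 0 < w.getD (i + t) 0 ↔ τ.getD s 0 < τ.getD t 0)

/-- The number of occurrences of the consecutive pattern `τ` in `w`. -/
noncomputable def numOcc (τ w : List ℕ) : ℕ :=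
  Set.ncard {i | OccAt τ w i}

/-- The number of distinct letters in the terminal (rightmost) increasing run
of `w`, i.e. in the longest weakly increasing suffix of `w`. -/
noncomputable def trun (w : List ℕ) : ℕ :=
  ((w.drop (sInf {i | List.Chain' (· ≤ ·) (w.drop i)})).toFinset).card

/-- The total number of occurrences of the consecutive pattern `τ` over all
flattened Catalan words of length `n`. -/
noncomputable def tot (n : ℕ) (τ : List ℕ) : ℕ :=
  ∑ᶠ w ∈ FlatCat n, numOcc τ w

def runStep (p : ℕ × ℕ) (x : ℕ) : ℕ × ℕ := if p.1 ≤ x then (x, p.2) else (x, x)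

def runState : List ℕ → ℕ × ℕ
  | [] => (0, 0)
  | a :: t => t.foldl runStep (a, a)

def lastLetter (w : List ℕ) : ℕ := (runState w).1

def lastRunHead (w : List ℕ) : ℕ := (runState w).2

def slack (w : List ℕ) : ℕ := lastLetter w - lastRunHead w

def penultLetter (w : List ℕ) : ℕ := w.getD (w.length - 2) 0

section RunState

variable {w : List ℕ} {x : ℕ}

lemma runState_concat (hw : w ≠ []) : runState (w ++ [x]) = runStep (runState w) x := by
  obtain ⟨a, t, rfl⟩ := List.exists_cons_of_ne_nil hw
  simp [runState]

lemma lastLetter_concat (hw : w ≠ []) : lastLetter (w ++ [x]) = x := by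
  rw [lastLetter, runState_concat hw, runStep]
  split_ifs <;> rfl

lemma lastRunHead_concat_of_le (hw : w ≠ []) (h : lastLetter w ≤ x) :
    lastRunHead (w ++ [x]) = lastRunHead w := by
  have h' : (runState w).1 ≤ x := h
  rw [lastRunHead, runState_concat hw, runStep, if_pos h', lastRunHead]

lemma lastRunHead_concat_of_lt (hw : w ≠ []) (h : x < lastLetter w) :
    lastRunHead (w ++ [x]) = x := by
  have h' : ¬(runState w).1 ≤ x := not_le.mpr h
  rw [lastRunHead, runState_concat hw, runStep, if_neg h']

lemma getD_concat_length : (w ++ [x]).getD w.length 0 = x := by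
  simp

lemma lastLetter_eq_getD (hw : w ≠ []) : lastLetter w = w.getD (w.length - 1) 0 := by
  induction w using List.reverseRecOn with
  | nil => contradiction
  | append_singleton u y _ =>
    rcases eq_or_ne u [] with rfl | hu
    · rfl
    · simp [lastLetter_concat hu]

lemma penultLetter_concat (hw : w ≠ []) : penultLetter (w ++ [x]) = lastLetter w := by
  have hlen : 0 < w.length := List.length_pos_of_ne_nil hw
  rw [penultLetter, lastLetter_eq_getD hw, List.getD_append _ _ _ _ (by simp; omega)]
  simp

lemma lastRunHead_le_lastLetter (w : List ℕ) : lastRunHead w ≤ lastLetter w := by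
  induction w using List.reverseRecOn with
  | nil => exact le_rfl
  | append_singleton u y ih =>
    rcases eq_or_ne u [] with rfl | hu
    · exact le_rfl
    rcases le_or_gt (lastLetter u) y with h | h
    · rw [lastRunHead_concat_of_le hu h, lastLetter_concat hu]
      omega
    · rw [lastRunHead_concat_of_lt hu h, lastLetter_concat hu]

lemma lastRunHead_eq_of_lt_penultLetter (h : lastLetter w < penultLetter w) :
    lastRunHead w = lastLetter w := by
  induction w using List.reverseRecOn with
  | nil => exact absurd h (lt_irrefl 0)
  | append_singleton u y _ =>
    rcases eq_or_ne u [] with rfl | hu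
    · rfl
    rw [penultLetter_concat hu, lastLetter_concat hu] at h
    rw [lastRunHead_concat_of_lt hu h, lastLetter_concat hu]

end RunState

section Concat

variable {w : List ℕ} {x i : ℕ}

lemma getD_concat_of_lt (hi : i < w.length) : (w ++ [x]).getD i 0 = w.getD i 0 :=
  List.getD_append _ _ _ _ hi

lemma runStart_concat_of_lt (hi : i < w.length) : RunStart (w ++ [x]) i ↔ RunStart w i := by
  simp only [RunStart, getD_concat_of_lt hi, getD_concat_of_lt (lt_of_le_of_lt (Nat.sub_le i 1) hi),
    List.length_append, List.length_singleton]
  constructor <;> rintro ⟨-, h⟩ <;> exact ⟨by omega, h⟩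

lemma runStart_concat_length (hw : w ≠ []) :
    RunStart (w ++ [x]) w.length ↔ x < lastLetter w := by
  have hlen : 0 < w.length := List.length_pos_of_ne_nil hw
  simp only [RunStart, getD_concat_length, getD_concat_of_lt (Nat.sub_lt hlen one_pos),
    lastLetter_eq_getD hw, List.length_append, List.length_singleton]
  omega

lemma runStart_concat (hw : w ≠ []) :
    RunStart (w ++ [x]) i ↔ RunStart w i ∨ (i = w.length ∧ x < lastLetter w) := by
  rcases lt_trichotomy i w.length with hi | rfl | hi
  · simp [runStart_concat_of_lt hi, hi.ne]
  · rw [runStart_concat_length hw]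
    simp [RunStart]
  · simp [RunStart, hi.ne', hi.not_ge, hi.not_gt]

lemma exists_lastRunStart (hw : w ≠ []) :
    ∃ i₀, RunStart w i₀ ∧ w.getD i₀ 0 = lastRunHead w ∧ ∀ i, RunStart w i → i ≤ i₀ := by
  induction w using List.reverseRecOn with
  | nil => contradiction
  | append_singleton u y ih =>
    rcases eq_or_ne u [] with rfl | hu
    · refine ⟨0, ⟨by simp, Or.inl rfl⟩, rfl, fun i hi => ?_⟩
      simpa [RunStart] using hi.1
    simp only [runStart_concat hu]
    rcases le_or_gt (lastLetter u) y with h | h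
    · obtain ⟨i₀, hi₀, hval, hmax⟩ := ih hu
      refine ⟨i₀, Or.inl hi₀, ?_, ?_⟩
      · rw [getD_concat_of_lt hi₀.1, hval, lastRunHead_concat_of_le hu h]
      · rintro i (hi | ⟨-, hlt⟩)
        exacts [hmax i hi, absurd hlt (not_lt.mpr h)]
    · refine ⟨u.length, Or.inr ⟨rfl, h⟩, ?_, ?_⟩
      · rw [getD_concat_length, lastRunHead_concat_of_lt hu h]
      · rintro i (hi | ⟨rfl, -⟩)
        exacts [hi.1.le, le_rfl]

/-- The last run of a flattened word has the largest head. -/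
lemma isFlattened_concat (hw : w ≠ []) :
    IsFlattened (w ++ [x]) ↔ IsFlattened w ∧ (x < lastLetter w → lastRunHead w ≤ x) := by
  obtain ⟨i₀, hi₀, hval, hmax⟩ := exists_lastRunStart hw
  simp only [IsFlattened, runStart_concat hw]
  constructor
  · intro h
    refine ⟨fun i j hi hj hij => ?_, fun hx => ?_⟩
    · have := h i j (Or.inl hi) (Or.inl hj) hij
      rwa [getD_concat_of_lt hi.1, getD_concat_of_lt hj.1] at this
    · have := h i₀ w.length (Or.inl hi₀) (Or.inr ⟨rfl, hx⟩) hi₀.1.le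
      rwa [getD_concat_of_lt hi₀.1, getD_concat_length, hval] at this
  · rintro ⟨hflat, hnew⟩ i j (hi | ⟨rfl, -⟩) (hj | ⟨rfl, hx⟩) hij
    · rw [getD_concat_of_lt hi.1, getD_concat_of_lt hj.1]
      exact hflat i j hi hj hij
    · rw [getD_concat_of_lt hi.1, getD_concat_length]
      exact (hflat i i₀ hi hi₀ (hmax i hi)).trans (hval ▸ hnew hx)
    · exact absurd hij (not_le.mpr hj.1)
    · exact le_rfl

lemma isCatalan_concat (hw : w ≠ []) :
    IsCatalan (w ++ [x]) ↔ IsCatalan w ∧ 1 ≤ x ∧ x ≤ lastLetter w + 1 := by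
  have hlen : 0 < w.length := List.length_pos_of_ne_nil hw
  have hlast : w.length - 1 + 1 = w.length := Nat.sub_add_cancel hlen
  simp only [IsCatalan, getD_concat_of_lt hlen, List.length_append, List.length_singleton,
    lastLetter_eq_getD hw, ne_eq, List.append_eq_nil_iff, List.cons_ne_self, and_false,
    not_false_eq_true, true_and, hw]
  constructor
  · rintro ⟨h1, hstep⟩
    have hx := hstep (w.length - 1) (by omega)
    rw [hlast, getD_concat_length, getD_concat_of_lt (by omega)] at hx
    refine ⟨⟨h1, fun j hj => ?_⟩, hx⟩
    have := hstep j (by omega)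
    rwa [getD_concat_of_lt hj, getD_concat_of_lt (by omega)] at this
  · rintro ⟨⟨h1, hstep⟩, hx⟩
    refine ⟨h1, fun j hj => ?_⟩
    rcases lt_or_ge (j + 1) w.length with hj' | hj'
    · rw [getD_concat_of_lt hj', getD_concat_of_lt (by omega)]
      exact hstep j hj'
    · obtain rfl : j = w.length - 1 := by omega
      rwa [hlast, getD_concat_length, getD_concat_of_lt (by omega)]

end Concat

def extensions (w : List ℕ) : Finset ℕ := Finset.Icc (lastRunHead w) (lastLetter w + 1)

def flatCatFinset : ℕ → Finset (List ℕ)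
  | 0 => ∅
  | 1 => {[1]}
  | n + 2 => (flatCatFinset (n + 1)).biUnion fun w => (extensions w).image fun x => w ++ [x]

section FlatCat

variable {w : List ℕ} {n : ℕ}

lemma IsCatalan.one_le_getD (hw : IsCatalan w) {i : ℕ} (hi : i < w.length) : 1 ≤ w.getD i 0 := by
  cases i with
  | zero => exact hw.2.1.ge
  | succ j => exact (hw.2.2 j hi).1

lemma IsCatalan.one_le_lastRunHead (hw : IsCatalan w) : 1 ≤ lastRunHead w := by
  obtain ⟨i₀, hi₀, hval, -⟩ := exists_lastRunStart hw.1
  exact hval ▸ hw.one_le_getD hi₀.1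

lemma concat_mem_flatCat_iff (hw : w ∈ FlatCat n) {x : ℕ} :
    w ++ [x] ∈ FlatCat (n + 1) ↔ x ∈ extensions w := by
  obtain ⟨hlen, hcat, hflat⟩ := hw
  have h1 := hcat.one_le_lastRunHead
  have h2 := lastRunHead_le_lastLetter w
  simp only [FlatCat, Set.mem_ofPred_eq, List.length_append, List.length_singleton, hlen,
    isCatalan_concat hcat.1, isFlattened_concat hcat.1, extensions, Finset.mem_Icc, hcat, hflat,
    true_and]
  omega

lemma mem_flatCat_succ_iff (hn : 1 ≤ n) :
    w ∈ FlatCat (n + 1) ↔ ∃ u ∈ FlatCat n, ∃ x ∈ extensions u, u ++ [x] = w := by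
  constructor
  · rintro hw
    obtain ⟨hlen, hcat, hflat⟩ := hw
    obtain ⟨u, x, rfl⟩ : ∃ u x, w = u ++ [x] :=
      ⟨w.dropLast, w.getLast hcat.1, (List.dropLast_append_getLast hcat.1).symm⟩
    have hu : u ≠ [] := by rintro rfl; simp at hlen; omega
    have hmem : u ∈ FlatCat n :=
      ⟨by simpa using hlen, ((isCatalan_concat hu).mp hcat).1, ((isFlattened_concat hu).mp hflat).1⟩
    exact ⟨u, hmem, x, (concat_mem_flatCat_iff hmem).mp ⟨hlen, hcat, hflat⟩, rfl⟩
  · rintro ⟨u, hu, x, hx, rfl⟩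
    exact (concat_mem_flatCat_iff hu).mpr hx

lemma coe_flatCatFinset : ∀ n, (flatCatFinset n : Set (List ℕ)) = FlatCat n
  | 0 => by
    ext w
    simp only [flatCatFinset, Finset.coe_empty, Set.mem_empty_iff_false, false_iff]
    exact fun ⟨hlen, hcat, _⟩ => hcat.1 (List.eq_nil_of_length_eq_zero hlen)
  | 1 => by
    ext w
    simp only [flatCatFinset, Finset.coe_singleton, Set.mem_singleton_iff]
    constructor
    · rintro rfl
      refine ⟨rfl, ⟨by simp, rfl, fun i hi => by simp at hi⟩, fun i j hi hj _ => ?_⟩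
      simp [RunStart] at hi hj
      simp [hi, hj]
    · rintro ⟨hlen, hcat, -⟩
      obtain ⟨a, rfl⟩ := List.length_eq_one_iff.mp hlen
      simpa [IsCatalan] using hcat
  | n + 2 => by
    ext w
    rw [mem_flatCat_succ_iff (by omega), ← coe_flatCatFinset (n + 1)]
    simp [flatCatFinset]

end FlatCat

section Extensions

variable {w : List ℕ} {n : ℕ}

lemma card_extensions (w : List ℕ) : (extensions w).card = slack w + 2 := by
  have := lastRunHead_le_lastLetter w
  rw [extensions, Nat.card_Icc, slack]
  omega

lemma lastLetter_succ_mem_extensions (w : List ℕ) : lastLetter w + 1 ∈ extensions w :=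
  Finset.mem_Icc.mpr ⟨(lastRunHead_le_lastLetter w).trans (Nat.le_succ _), le_rfl⟩

lemma sum_extensions {M : Type*} [AddCommMonoid M] (w : List ℕ) (f : ℕ → M) :
    ∑ x ∈ extensions w, f x
      = ∑ x ∈ Finset.Ico (lastRunHead w) (lastLetter w), f x + f (lastLetter w)
        + f (lastLetter w + 1) := by
  have h := lastRunHead_le_lastLetter w
  rw [extensions, ← Finset.Ico_add_one_right_eq_Icc, Finset.sum_Ico_succ_top (by omega),
    Finset.sum_Ico_succ_top h]

lemma slack_concat_of_lt (hw : w ≠ []) {x : ℕ} (h : x < lastLetter w) :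
    slack (w ++ [x]) = 0 := by
  rw [slack, lastLetter_concat hw, lastRunHead_concat_of_lt hw h, Nat.sub_self]

lemma slack_concat_of_le (hw : w ≠ []) {x : ℕ} (h : lastLetter w ≤ x) :
    slack (w ++ [x]) = x - lastRunHead w := by
  rw [slack, lastLetter_concat hw, lastRunHead_concat_of_le hw h]

lemma sum_slack_concat (hw : w ≠ []) :
    ∑ x ∈ extensions w, slack (w ++ [x]) = 2 * slack w + 1 := by
  have h := lastRunHead_le_lastLetter w
  rw [sum_extensions, Finset.sum_eq_zero fun x hx =>
      slack_concat_of_lt hw (Finset.mem_Ico.mp hx).2,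
    slack_concat_of_le hw le_rfl, slack_concat_of_le hw (Nat.le_succ _), slack]
  omega

lemma sum_pos_slack_concat (hw : w ≠ []) :
    ∑ x ∈ extensions w, (if 0 < slack (w ++ [x]) then 1 else 0)
      = (if 0 < slack w then 1 else 0) + 1 := by
  have h := lastRunHead_le_lastLetter w
  rw [sum_extensions, Finset.sum_eq_zero fun x hx => by
      rw [slack_concat_of_lt hw (Finset.mem_Ico.mp hx).2, if_neg (lt_irrefl 0)],
    slack_concat_of_le hw le_rfl, slack_concat_of_le hw (Nat.le_succ _), slack]
  simp [show 0 < lastLetter w + 1 - lastRunHead w by omega]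

end Extensions

section Counting

variable {n : ℕ}

lemma ne_nil_of_mem_flatCatFinset {w : List ℕ} (hw : w ∈ flatCatFinset n) : w ≠ [] :=
  (Finset.mem_coe.mpr hw |> (coe_flatCatFinset n).subset).2.1.1

lemma length_of_mem_flatCatFinset {w : List ℕ} (hw : w ∈ flatCatFinset n) : w.length = n :=
  (Finset.mem_coe.mpr hw |> (coe_flatCatFinset n).subset).1

lemma sum_flatCatFinset_succ {M : Type*} [AddCommMonoid M] (hn : 1 ≤ n) (f : List ℕ → M) :
    ∑ w ∈ flatCatFinset (n + 1), f w
      = ∑ w ∈ flatCatFinset n, ∑ x ∈ extensions w, f (w ++ [x]) := by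
  obtain ⟨k, rfl⟩ : ∃ k, n = k + 1 := ⟨n - 1, by omega⟩
  rw [flatCatFinset, Finset.sum_biUnion]
  · exact Finset.sum_congr rfl fun w _ =>
      Finset.sum_image fun x _ y _ h => (List.append_singleton_inj.mp h).2
  · intro u _ v _ huv
    simp only [Function.onFun, Finset.disjoint_left, Finset.mem_image]
    rintro _ ⟨x, -, rfl⟩ ⟨y, -, h⟩
    exact huv (List.append_singleton_inj.mp h).1.symm

lemma card_flatCatFinset_succ (hn : 1 ≤ n) :
    (flatCatFinset (n + 1)).card
      = ∑ w ∈ flatCatFinset n, slack w + 2 * (flatCatFinset n).card := by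
  rw [Finset.card_eq_sum_ones, sum_flatCatFinset_succ hn]
  simp [card_extensions, Finset.sum_add_distrib, mul_comm]

lemma sum_slack_flatCatFinset_succ (hn : 1 ≤ n) :
    ∑ w ∈ flatCatFinset (n + 1), slack w
      = 2 * ∑ w ∈ flatCatFinset n, slack w + (flatCatFinset n).card := by
  rw [sum_flatCatFinset_succ hn, Finset.sum_congr rfl fun w hw =>
    sum_slack_concat (ne_nil_of_mem_flatCatFinset hw)]
  simp [Finset.sum_add_distrib, Finset.mul_sum]

lemma card_filter_pos_slack_flatCatFinset_succ (hn : 1 ≤ n) :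
    ((flatCatFinset (n + 1)).filter (0 < slack ·)).card
      = ((flatCatFinset n).filter (0 < slack ·)).card + (flatCatFinset n).card := by
  rw [Finset.card_filter, Finset.card_filter, sum_flatCatFinset_succ hn,
    Finset.sum_congr rfl fun w hw => sum_pos_slack_concat (ne_nil_of_mem_flatCatFinset hw)]
  simp [Finset.sum_add_distrib]

lemma card_and_sum_slack_flatCatFinset (m : ℕ) :
    2 * ((flatCatFinset (m + 1)).card : ℤ) = 3 ^ m + 1 ∧
      2 * ((∑ w ∈ flatCatFinset (m + 1), slack w : ℕ) : ℤ) = 3 ^ m - 1 := by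
  induction m with
  | zero => decide
  | succ m ih =>
    rw [card_flatCatFinset_succ (n := m + 1) (by omega),
      sum_slack_flatCatFinset_succ (n := m + 1) (by omega)]
    push_cast at ih ⊢
    exact ⟨by linear_combination ih.2 + 2 * ih.1, by linear_combination 2 * ih.2 + ih.1⟩

lemma card_filter_pos_slack_flatCatFinset (m : ℕ) :
    4 * (((flatCatFinset (m + 1)).filter (0 < slack ·)).card : ℤ) = 3 ^ m + 2 * m - 1 := by
  induction m with
  | zero => decide
  | succ m ih =>
    rw [card_filter_pos_slack_flatCatFinset_succ (n := m + 1) (by omega)]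
    push_cast at ih ⊢
    linear_combination ih + 2 * (card_and_sum_slack_flatCatFinset m).1

end Counting

section Occurrences

variable {τ w : List ℕ} {x i : ℕ}

instance (τ w : List ℕ) (i : ℕ) : Decidable (OccAt τ w i) :=
  inferInstanceAs (Decidable (_ ∧ _))

lemma finite_setOf_occAt (τ w : List ℕ) : {i | OccAt τ w i}.Finite :=
  (Set.finite_Iic w.length).subset fun i hi => by
    have := hi.1
    simp only [Set.mem_Iic]
    omega

lemma numOcc_eq_zero_of_length_lt (h : w.length < τ.length) : numOcc τ w = 0 := by
  rw [numOcc, Set.ncard_eq_zero (finite_setOf_occAt τ w), Set.eq_empty_iff_forall_notMem]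
  intro i hi
  have := hi.1
  omega

lemma occAt_concat_of_le (h : i + τ.length ≤ w.length) :
    OccAt τ (w ++ [x]) i ↔ OccAt τ w i := by
  have hg : ∀ s < τ.length, (w ++ [x]).getD (i + s) 0 = w.getD (i + s) 0 :=
    fun s hs => getD_concat_of_lt (by omega)
  simp only [OccAt, List.length_append, List.length_singleton]
  constructor <;> rintro ⟨-, hocc⟩ <;> refine ⟨by omega, fun s hs t ht => ?_⟩
  · rw [← hg s hs, ← hg t ht]
    exact hocc s hs t ht
  · rw [hg s hs, hg t ht]
    exact hocc s hs t ht

lemma numOcc_concat (hτ : τ ≠ []) :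
    numOcc τ (w ++ [x])
      = numOcc τ w + if OccAt τ (w ++ [x]) (w.length + 1 - τ.length) then 1 else 0 := by
  have hτ' := List.length_pos_of_ne_nil hτ
  set k := w.length + 1 - τ.length
  have hk : k ∉ {i | OccAt τ w i} := fun h => by have := h.1; omega
  have hset : {i | OccAt τ (w ++ [x]) i}
      = {i | OccAt τ w i} ∪ {i | i = k ∧ OccAt τ (w ++ [x]) i} := by
    ext i
    simp only [Set.mem_union, Set.mem_ofPred_eq]
    by_cases hi : i + τ.length ≤ w.length
    · simp [occAt_concat_of_le hi, show i ≠ k by omega]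
    · constructor
      · exact fun h => Or.inr ⟨by have := h.1; simp at this; omega, h⟩
      · rintro (h | h)
        exacts [absurd h.1 hi, h.2]
  rw [numOcc, numOcc, hset]
  split_ifs with hocc
  · have : {i | i = k ∧ OccAt τ (w ++ [x]) i} = {k} := by
      ext i
      simp only [Set.mem_ofPred_eq, Set.mem_singleton_iff, and_iff_left_iff_imp]
      rintro rfl
      exact hocc
    rw [this, Set.union_singleton, Set.ncard_insert_of_notMem hk (finite_setOf_occAt τ w)]
  · have : {i | i = k ∧ OccAt τ (w ++ [x]) i} = ∅ := by
      ext i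
      simp only [Set.mem_ofPred_eq, Set.mem_empty_iff_false, iff_false, not_and]
      rintro rfl
      exact hocc
    rw [this, Set.union_empty, add_zero]

lemma occAt_concat_tail_iff (hw : 2 ≤ w.length) (hτ : τ.length = 3) :
    OccAt τ (w ++ [x]) (w.length - 2) ↔ ∀ s < 3, ∀ t < 3,
      ([penultLetter w, lastLetter w, x].getD s 0 < [penultLetter w, lastLetter w, x].getD t 0
        ↔ τ.getD s 0 < τ.getD t 0) := by
  have hletters : ∀ s < 3,
      (w ++ [x]).getD (w.length - 2 + s) 0 = [penultLetter w, lastLetter w, x].getD s 0 := by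
    intro s hs
    have hw' : w ≠ [] := List.ne_nil_of_length_pos (by omega)
    interval_cases s
    · exact getD_concat_of_lt (by omega)
    · rw [show w.length - 2 + 1 = w.length - 1 by omega, getD_concat_of_lt (by omega),
        lastLetter_eq_getD hw']
      rfl
    · rw [show w.length - 2 + 2 = w.length by omega, getD_concat_length]
      rfl
  simp only [OccAt, hτ, List.length_append, List.length_singleton]
  constructor
  · rintro ⟨-, h⟩ s hs t ht
    rw [← hletters s hs, ← hletters t ht]
    exact h s hs t ht
  · intro h
    refine ⟨by omega, fun s hs t ht => ?_⟩
    rw [hletters s hs, hletters t ht]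
    exact h s hs t ht

end Occurrences

def IsValley (τ : List ℕ) : Prop :=
  τ.length = 3 ∧ τ.getD 1 0 < τ.getD 0 0 ∧ τ.getD 1 0 < τ.getD 2 0

def newOccCount (τ : List ℕ) (n : ℕ) : ℕ :=
  ((flatCatFinset n).filter fun w => OccAt τ (w ++ [lastLetter w + 1]) (w.length - 2)).card

namespace IsValley

variable {τ w : List ℕ} {n : ℕ}

lemma of_occAt_concat (hτ : IsValley τ) (hw : 2 ≤ w.length) {x : ℕ}
    (hx : x ≤ lastLetter w + 1) (h : OccAt τ (w ++ [x]) (w.length - 2)) :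
    x = lastLetter w + 1 ∧ lastRunHead w = lastLetter w := by
  rw [occAt_concat_tail_iff hw hτ.1] at h
  have hasc := (h 1 (by omega) 2 (by omega)).mpr hτ.2.2
  have hdesc := (h 1 (by omega) 0 (by omega)).mpr hτ.2.1
  exact ⟨by simp at hasc; omega, lastRunHead_eq_of_lt_penultLetter hdesc⟩

lemma sum_numOcc_concat (hτ : IsValley τ) (hw : 2 ≤ w.length) :
    ∑ x ∈ extensions w, numOcc τ (w ++ [x])
      = numOcc τ w * (slack w + 2)
        + if OccAt τ (w ++ [lastLetter w + 1]) (w.length - 2) then 1 else 0 := by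
  have hk : w.length + 1 - τ.length = w.length - 2 := by rw [hτ.1]; omega
  have hτ0 : τ ≠ [] := List.ne_nil_of_length_pos (by rw [hτ.1]; omega)
  simp only [numOcc_concat hτ0, hk, Finset.sum_add_distrib, Finset.sum_const, card_extensions,
    smul_eq_mul, mul_comm]
  congr 1
  exact Finset.sum_eq_single_of_mem _ (lastLetter_succ_mem_extensions w) fun x hx hne =>
    if_neg fun h => hne (hτ.of_occAt_concat hw (Finset.mem_Icc.mp hx).2 h).1

lemma sum_numOcc_mul_slack_concat (hτ : IsValley τ) (hw : 2 ≤ w.length) :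
    ∑ x ∈ extensions w, numOcc τ (w ++ [x]) * slack (w ++ [x])
      = numOcc τ w * (2 * slack w + 1)
        + if OccAt τ (w ++ [lastLetter w + 1]) (w.length - 2) then 1 else 0 := by
  have hk : w.length + 1 - τ.length = w.length - 2 := by rw [hτ.1]; omega
  have hτ0 : τ ≠ [] := List.ne_nil_of_length_pos (by rw [hτ.1]; omega)
  have hw0 : w ≠ [] := List.ne_nil_of_length_pos (by omega)
  simp only [numOcc_concat hτ0, hk, add_mul, Finset.sum_add_distrib, ← Finset.mul_sum,
    sum_slack_concat hw0]
  congr 1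
  rw [Finset.sum_eq_single_of_mem _ (lastLetter_succ_mem_extensions w) fun x hx hne => ?_]
  · split_ifs with h
    · rw [one_mul, slack_concat_of_le hw0 (Nat.le_succ _), (hτ.of_occAt_concat hw le_rfl h).2]
      omega
    · exact zero_mul _
  · rw [if_neg fun h => hne (hτ.of_occAt_concat hw (Finset.mem_Icc.mp hx).2 h).1, zero_mul]

lemma numOcc_eq_zero_of_mem_flatCatFinset_two (hτ : IsValley τ) (hw : w ∈ flatCatFinset 2) :
    numOcc τ w = 0 :=
  numOcc_eq_zero_of_length_lt <| by rw [length_of_mem_flatCatFinset hw, hτ.1]; omega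

lemma sum_numOcc_flatCatFinset_two (hτ : IsValley τ) :
    ∑ w ∈ flatCatFinset 2, numOcc τ w = 0 :=
  Finset.sum_eq_zero fun _ hw => hτ.numOcc_eq_zero_of_mem_flatCatFinset_two hw

/-- Both sums obey the same symmetric recursion from the same initial value. -/
lemma sum_numOcc_mul_slack (hτ : IsValley τ) (hn : 2 ≤ n) :
    ∑ w ∈ flatCatFinset n, numOcc τ w * slack w = ∑ w ∈ flatCatFinset n, numOcc τ w := by
  induction n, hn using Nat.le_induction with
  | base =>
    refine Finset.sum_congr rfl fun w hw => ?_
    rw [hτ.numOcc_eq_zero_of_mem_flatCatFinset_two hw, zero_mul]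
  | succ n hn ih =>
    have hlen : ∀ w ∈ flatCatFinset n, 2 ≤ w.length := fun w hw => by
      rw [length_of_mem_flatCatFinset hw]; exact hn
    rw [sum_flatCatFinset_succ (by omega), sum_flatCatFinset_succ (by omega),
      Finset.sum_congr rfl fun w hw => hτ.sum_numOcc_mul_slack_concat (hlen w hw),
      Finset.sum_congr rfl fun w hw => hτ.sum_numOcc_concat (hlen w hw)]
    simp only [Finset.sum_add_distrib, mul_add, mul_one, ← Finset.sum_mul, mul_left_comm _ 2,
      ← Finset.mul_sum, ih]
    ring

lemma sum_numOcc_succ (hτ : IsValley τ) (hn : 2 ≤ n) :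
    ∑ w ∈ flatCatFinset (n + 1), numOcc τ w
      = 3 * ∑ w ∈ flatCatFinset n, numOcc τ w + newOccCount τ n := by
  rw [sum_flatCatFinset_succ (by omega), Finset.sum_congr rfl fun w hw => hτ.sum_numOcc_concat
    (by rw [length_of_mem_flatCatFinset hw]; omega)]
  simp only [Finset.sum_add_distrib, mul_add, ← Finset.sum_mul, newOccCount, Finset.card_filter]
  rw [hτ.sum_numOcc_mul_slack hn]
  ring

end IsValley

section Patterns

variable {w : List ℕ} {n : ℕ}

lemma isValley_212 : IsValley [2, 1, 2] := ⟨rfl, by decide, by decide⟩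

lemma isValley_312 : IsValley [3, 1, 2] := ⟨rfl, by decide, by decide⟩

lemma occAt_212_concat_iff (hw : 2 ≤ w.length) :
    OccAt [2, 1, 2] (w ++ [lastLetter w + 1]) (w.length - 2)
      ↔ penultLetter w = lastLetter w + 1 := by
  rw [occAt_concat_tail_iff hw rfl]
  simp only [Nat.forall_lt_succ_right', Nat.not_lt_zero, IsEmpty.forall_iff, implies_true,
    true_and, List.getD_cons_zero, List.getD_cons_succ]
  omega

lemma occAt_312_concat_iff (hw : 2 ≤ w.length) :
    OccAt [3, 1, 2] (w ++ [lastLetter w + 1]) (w.length - 2)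
      ↔ lastLetter w + 2 ≤ penultLetter w := by
  rw [occAt_concat_tail_iff hw rfl]
  simp only [Nat.forall_lt_succ_right', Nat.not_lt_zero, IsEmpty.forall_iff, implies_true,
    true_and, List.getD_cons_zero, List.getD_cons_succ]
  omega

lemma newOccCount_succ_of_iff {τ : List ℕ} (p : ℕ → ℕ → Prop) [DecidableRel p]
    (hp : ∀ v : List ℕ, 2 ≤ v.length →
      (OccAt τ (v ++ [lastLetter v + 1]) (v.length - 2) ↔ p (penultLetter v) (lastLetter v)))
    (hn : 1 ≤ n) :
    newOccCount τ (n + 1)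
      = ∑ w ∈ flatCatFinset n, ((extensions w).filter (p (lastLetter w) ·)).card := by
  rw [newOccCount, Finset.card_filter, sum_flatCatFinset_succ hn]
  refine Finset.sum_congr rfl fun w hw => ?_
  have hw0 := ne_nil_of_mem_flatCatFinset hw
  have hlen := length_of_mem_flatCatFinset hw
  rw [Finset.card_filter]
  refine Finset.sum_congr rfl fun x _ => ?_
  simp only [hp (w ++ [x]) (by simp; omega)]
  simp only [penultLetter_concat hw0, lastLetter_concat hw0]

lemma newOccCount_212_succ (hn : 1 ≤ n) :
    newOccCount [2, 1, 2] (n + 1) = ((flatCatFinset n).filter (0 < slack ·)).card := by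
  rw [newOccCount_succ_of_iff (fun a b => a = b + 1) (fun _ hv => occAt_212_concat_iff hv) hn,
    Finset.card_filter]
  refine Finset.sum_congr rfl fun w _ => ?_
  rw [show (extensions w).filter (fun x => lastLetter w = x + 1)
      = Finset.Ico (max (lastRunHead w) (lastLetter w - 1)) (lastLetter w) by
    ext x
    simp only [extensions, Finset.mem_filter, Finset.mem_Icc, Finset.mem_Ico]
    omega, Nat.card_Ico, slack]
  split_ifs <;> omega

lemma newOccCount_312_succ (hn : 1 ≤ n) :
    newOccCount [3, 1, 2] (n + 1) + ((flatCatFinset n).filter (0 < slack ·)).card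
      = ∑ w ∈ flatCatFinset n, slack w := by
  rw [newOccCount_succ_of_iff (fun a b => b + 2 ≤ a) (fun _ hv => occAt_312_concat_iff hv) hn,
    Finset.card_filter, ← Finset.sum_add_distrib]
  refine Finset.sum_congr rfl fun w _ => ?_
  rw [show (extensions w).filter (fun x => x + 2 ≤ lastLetter w)
      = Finset.Ico (lastRunHead w) (lastLetter w - 1) by
    ext x
    simp only [extensions, Finset.mem_filter, Finset.mem_Icc, Finset.mem_Ico]
    omega, Nat.card_Ico, slack]
  split_ifs <;> omega

lemma newOccCount_212 (m : ℕ) : 4 * (newOccCount [2, 1, 2] (m + 2) : ℤ) = 3 ^ m + 2 * m - 1 := by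
  rw [newOccCount_212_succ (by omega), card_filter_pos_slack_flatCatFinset]

lemma newOccCount_312 (m : ℕ) : 4 * (newOccCount [3, 1, 2] (m + 2) : ℤ) = 3 ^ m - 2 * m - 1 := by
  have h := congrArg (Nat.cast : ℕ → ℤ) (newOccCount_312_succ (n := m + 1) (by omega))
  rw [Nat.cast_add] at h
  linear_combination 4 * h - card_filter_pos_slack_flatCatFinset m
    + 2 * (card_and_sum_slack_flatCatFinset m).2

lemma sum_numOcc_212 (m : ℕ) :
    12 * (∑ w ∈ flatCatFinset (m + 2), numOcc [2, 1, 2] w : ℕ) = (m : ℤ) * (3 ^ m - 3) := by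
  induction m with
  | zero => simp [isValley_212.sum_numOcc_flatCatFinset_two]
  | succ m ih =>
    rw [isValley_212.sum_numOcc_succ (n := m + 2) (by omega)]
    push_cast at ih ⊢
    linear_combination 3 * ih + 3 * newOccCount_212 m

lemma sum_numOcc_312 (m : ℕ) :
    12 * (∑ w ∈ flatCatFinset (m + 2), numOcc [3, 1, 2] w : ℕ)
      = ((m : ℤ) - 3) * 3 ^ m + 3 * m + 3 := by
  induction m with
  | zero => simp [isValley_312.sum_numOcc_flatCatFinset_two]
  | succ m ih =>
    rw [isValley_312.sum_numOcc_succ (n := m + 2) (by omega)]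
    push_cast at ih ⊢
    linear_combination 3 * ih + 3 * newOccCount_312 m

end Patterns

lemma tot_eq_sum_flatCatFinset (n : ℕ) (τ : List ℕ) :
    tot n τ = ∑ w ∈ flatCatFinset n, numOcc τ w := by
  rw [tot, ← coe_flatCatFinset, finsum_mem_coe_finset]

/-- For every `n ≥ 2`: `4·tot_n(212) = (n−2)(3^(n−3) − 1)` and
`4·tot_n(312) = (n−5)·3^(n−3) + n − 1`, as equalities of real numbers (with
integer exponents, so both right-hand sides vanish at `n = 2`). -/
theorem tot_212_312 (n : ℕ) (hn : 2 ≤ n) :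
    (4 * tot n [2, 1, 2] : ℝ)
      = ((n : ℝ) - 2) * ((3 : ℝ) ^ ((n : ℤ) - 3) - 1) ∧
    (4 * tot n [3, 1, 2] : ℝ)
      = ((n : ℝ) - 5) * (3 : ℝ) ^ ((n : ℤ) - 3) + (n : ℝ) - 1 := by
  obtain ⟨m, rfl⟩ : ∃ m, n = m + 2 := ⟨n - 2, by omega⟩
  have h3 : (3 : ℝ) ^ (((m + 2 : ℕ) : ℤ) - 3) = 3 ^ m / 3 := by
    rw [show ((m + 2 : ℕ) : ℤ) - 3 = m - 1 by push_cast; ring, zpow_sub₀ three_ne_zero,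
      zpow_natCast, zpow_one]
  have h212 : 12 * (tot (m + 2) [2, 1, 2] : ℝ) = m * (3 ^ m - 3) := by
    exact_mod_cast tot_eq_sum_flatCatFinset (m + 2) _ ▸ sum_numOcc_212 m
  have h312 : 12 * (tot (m + 2) [3, 1, 2] : ℝ) = (m - 3) * 3 ^ m + 3 * m + 3 := by
    exact_mod_cast tot_eq_sum_flatCatFinset (m + 2) _ ▸ sum_numOcc_312 m
  rw [h3]
  push_cast
  exact ⟨by linear_combination h212 / 3, by linear_combination h312 / 3⟩
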